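/- arXiv:1212.6150 — 2 statements merged into one kernel-verified Lean document; each statement's English description precedes it below -/
import Mathlib

section
/- For every natural number q and every integer n, the congruence x₁² + x₂² + x₃³ + x₄³ + x₅⁶ + x₆⁶ ≡ n (mod q) is soluble in integers x₁, …, x₆. -/
open MeasureTheory Filter Set Topology

noncomputable section

/-- `e(x) = exp(2πix)`. -/
def e (x : ℝ) : ℂ := Complex.exp (2 * Real.pi * Complex.I * x)

/-- The Gauss-type sum `S_k(q,a) = ∑_{r=1}^q e(a r^k / q)`. -/
def S (k q : ℕ) (a : ℤ) : ℂ :=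
  ∑ r ∈ Finset.Icc 1 q, e ((a : ℝ) * (r : ℝ) ^ k / (q : ℝ))

/-- `A(q;n) = ∑_{a=1,(a,q)=1}^{q} q^{-6} S₂(q,a)² S₃(q,a)² S₆(q,a)² e(-na/q)`. -/
def A (q : ℕ) (n : ℤ) : ℂ :=
  ∑ a ∈ (Finset.Icc 1 q).filter (fun a => Nat.gcd a q = 1),
    (q : ℂ) ^ (-(6 : ℤ)) * S 2 q a ^ 2 * S 3 q a ^ 2 * S 6 q a ^ 2 *
      e (-(n : ℝ) * (a : ℝ) / (q : ℝ))

/-- The singular series `𝔖(n) = ∑_{q=1}^∞ A(q;n)`. -/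
def SS (n : ℤ) : ℂ := ∑' q : ℕ, A (q + 1) n

/-- `R(n)`: the number of representations `n = x₁²+x₂²+x₃³+x₄³+x₅⁶+x₆⁶` in positive integers. -/
def R (n : ℕ) : ℕ :=
  Nat.card {x : Fin 6 → ℕ //
    (∀ i, 1 ≤ x i) ∧
    x 0 ^ 2 + x 1 ^ 2 + x 2 ^ 3 + x 3 ^ 3 + x 4 ^ 6 + x 5 ^ 6 = n}

/-- The constant `(27/32)·2^{1/3}·Γ(4/3)⁶`. -/
def kappa : ℝ := 27 / 32 * 2 ^ ((1 : ℝ) / 3) * Real.Gamma (4 / 3) ^ 6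

/-- `P_k = ⌊X^{1/k}⌋`. -/
def Pk (X : ℝ) (k : ℕ) : ℕ := Nat.floor (X ^ ((1 : ℝ) / k))

/-- The Weyl sum `f_k(α) = ∑_{1 ≤ x ≤ P_k} e(α x^k)`. -/
def f (X : ℝ) (k : ℕ) (α : ℝ) : ℂ :=
  ∑ x ∈ Finset.Icc 1 (Pk X k), e (α * (x : ℝ) ^ k)

/-- `v_k(β) = ∫_0^{P_k} e(β γ^k) dγ`. -/
def v (X : ℝ) (k : ℕ) (β : ℝ) : ℂ :=
  ∫ γ in (0 : ℝ)..(Pk X k : ℝ), e (β * γ ^ k)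

/-- The major arcs `𝔓`: union of `{α ∈ [0,1) : |α - a/q| ≤ W/X}` over `0 ≤ a ≤ q ≤ W`, `(a,q)=1`. -/
def majorP (X W : ℝ) : Set ℝ :=
  {α | α ∈ Set.Ico (0 : ℝ) 1 ∧ ∃ q a : ℕ, 1 ≤ q ∧ a ≤ q ∧ (q : ℝ) ≤ W ∧
    Nat.gcd a q = 1 ∧ |α - (a : ℝ) / (q : ℝ)| ≤ W / X}

/-- The minor arcs `𝔭 = [0,1) \ 𝔓`. -/
def minorp (X W : ℝ) : Set ℝ := Set.Ico (0 : ℝ) 1 \ majorP X W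

/-- `𝔐(Q)`: union of `{α ∈ [0,1) : |qα - a| ≤ Q/X}` over `0 ≤ a ≤ q ≤ Q`, `(a,q)=1`. -/
def arcM (X Q : ℝ) : Set ℝ :=
  {α | α ∈ Set.Ico (0 : ℝ) 1 ∧ ∃ q a : ℕ, 1 ≤ q ∧ a ≤ q ∧ (q : ℝ) ≤ Q ∧
    Nat.gcd a q = 1 ∧ |(q : ℝ) * α - (a : ℝ)| ≤ Q / X}

/-- `𝔑(Q) = 𝔐(Q) \ 𝔐(Q/2)`. -/
def arcN (X Q : ℝ) : Set ℝ := arcM X Q \ arcM X (Q / 2)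

/-- The least denominator `q` of an arc `𝔐(q,a) ⊆ 𝔐(Q)` containing `α`. -/
def arcq (X Q α : ℝ) : ℕ :=
  sInf {q : ℕ | 1 ≤ q ∧ (q : ℝ) ≤ Q ∧ ∃ a : ℕ, a ≤ q ∧ Nat.gcd a q = 1 ∧
    |(q : ℝ) * α - (a : ℝ)| ≤ Q / X}

/-- The numerator `a` corresponding to the chosen denominator `arcq X Q α`. -/
def arca (X Q α : ℝ) : ℕ :=
  sInf {a : ℕ | a ≤ arcq X Q α ∧ Nat.gcd a (arcq X Q α) = 1 ∧
    |(arcq X Q α : ℝ) * α - (a : ℝ)| ≤ Q / X}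

/-- `f̃₂(α) = P₂ (q + P₂²|qα - a|)^{-1/2}` for `α` in the arc `𝔐(q,a) ⊆ 𝔐(Q)` with `q` least. -/
def ftil2 (X Q α : ℝ) : ℝ :=
  (Pk X 2 : ℝ) *
    ((arcq X Q α : ℝ) + (Pk X 2 : ℝ) ^ 2 * |(arcq X Q α : ℝ) * α - (arca X Q α : ℝ)|) ^
      (-(1 : ℝ) / 2)

/-- `f₃*(α) = q⁻¹ S₃(q,a) v₃(α - a/q)` for `α` in the arc `𝔐(q,a) ⊆ 𝔐(Q)` with `q` least. -/
def f3star (X Q α : ℝ) : ℂ :=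
  ((arcq X Q α : ℕ) : ℂ)⁻¹ * S 3 (arcq X Q α) ((arca X Q α : ℕ) : ℤ) *
    v X 3 (α - (arca X Q α : ℝ) / (arcq X Q α : ℝ))

/-- `K(α) = ∑_{n ∈ 𝒵} η_n e(-nα)`. -/
def K (Z : Finset ℤ) (η : ℤ → ℂ) (α : ℝ) : ℂ :=
  ∑ n ∈ Z, η n * e (-((n : ℝ) * α))

/-- The truncated singular integral `J(n;W)`. -/
def J (X W : ℝ) (n : ℤ) : ℂ :=
  ∫ β in (-(W / X))..(W / X), v X 2 β ^ 2 * v X 3 β ^ 2 * v X 6 β ^ 2 * e (-(β * (n : ℝ)))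

end

/-! By the Chinese remainder theorem it suffices to solve `x² + y² + a³ + b³ = n` in
`ZMod (p ^ m)`. For odd `p`, every nonzero residue mod `p` is a sum of two squares, so
`n ≡ x² + y² + a³ (mod p)` with `x ≢ 0`, and Hensel's lemma lifts `x`. For `p = 2`,
`n - (n + 1)³` is odd, hence a cube in `ℤ₂`. -/

open Polynomial

theorem ZMod.exists_pow_eq_intCast_of_pow_eq {p : ℕ} [Fact p.Prime] {k : ℕ}
    (hk : (k : ZMod p) ≠ 0) {a : ZMod p} (ha : a ≠ 0) {c : ℤ} (hac : a ^ k = c) (m : ℕ) :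
    ∃ y : ZMod (p ^ m), y ^ k = c := by
  obtain ⟨a, rfl⟩ := ZMod.intCast_surjective a
  have norm_eq_one {t : ℤ} (ht : (t : ZMod p) ≠ 0) : ‖(t : ℤ_[p])‖ = 1 :=
    le_antisymm (PadicInt.norm_le_one _) <| not_lt.mp fun h =>
      ht ((ZMod.intCast_zmod_eq_zero_iff_dvd _ _).mpr ((PadicInt.norm_int_lt_one_iff_dvd t).mp h))
  set F : ℤ[X] := X ^ k - C c
  have hval : ‖F.aeval (a : ℤ_[p])‖ < 1 := by
    simpa [F] using (PadicInt.norm_int_lt_one_iff_dvd (a ^ k - c)).mpr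
      ((ZMod.intCast_zmod_eq_zero_iff_dvd _ _).mp (by push_cast; rw [hac, sub_self]))
  have hder : ‖F.derivative.aeval (a : ℤ_[p])‖ = 1 := by
    simpa [F, derivative_X_pow] using norm_eq_one (t := k * a ^ (k - 1))
      (by push_cast; exact mul_ne_zero hk (pow_ne_zero _ ha))
  obtain ⟨z, hz, -⟩ := hensels_lemma (F := F) (by rwa [hder, one_pow])
  refine ⟨PadicInt.toZModPow m z, ?_⟩
  rw [← map_pow, ← map_intCast (PadicInt.toZModPow m), ← sub_eq_zero, ← map_sub]
  simpa [F] using congrArg (PadicInt.toZModPow m) hz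

def TwoSquaresTwoCubes (R : Type*) [CommRing R] : Prop :=
  ∀ n : R, ∃ x y a b : R, x ^ 2 + y ^ 2 + a ^ 3 + b ^ 3 = n

namespace TwoSquaresTwoCubes

variable {R S : Type*} [CommRing R] [CommRing S]

theorem of_surjective (f : R →+* S) (hf : Function.Surjective f) (hR : TwoSquaresTwoCubes R) :
    TwoSquaresTwoCubes S := by
  intro n
  obtain ⟨n, rfl⟩ := hf n
  obtain ⟨x, y, a, b, h⟩ := hR n
  exact ⟨f x, f y, f a, f b, by simp only [← map_pow, ← map_add, h]⟩

theorem prod (hR : TwoSquaresTwoCubes R) (hS : TwoSquaresTwoCubes S) :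
    TwoSquaresTwoCubes (R × S) := by
  rintro ⟨n₁, n₂⟩
  obtain ⟨x₁, y₁, a₁, b₁, h₁⟩ := hR n₁
  obtain ⟨x₂, y₂, a₂, b₂, h₂⟩ := hS n₂
  exact ⟨(x₁, x₂), (y₁, y₂), (a₁, a₂), (b₁, b₂), Prod.ext h₁ h₂⟩

end TwoSquaresTwoCubes

theorem ZMod.exists_ne_zero_sq_add_sq_add_cube_eq {p : ℕ} [Fact p.Prime] (n : ZMod p) :
    ∃ x y a : ZMod p, x ≠ 0 ∧ x ^ 2 + y ^ 2 + a ^ 3 = n := by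
  set a : ZMod p := if n = 0 then 1 else 0
  have hna : n - a ^ 3 ≠ 0 := by by_cases h : n = 0 <;> simp [a, h]
  obtain ⟨u, v, huv⟩ := ZMod.sq_add_sq p (n - a ^ 3)
  by_cases hu : u = 0
  · refine ⟨v, u, a, ?_, by linear_combination huv⟩
    rintro rfl
    exact hna (by rw [← huv, hu]; ring)
  · exact ⟨u, v, a, hu, by linear_combination huv⟩

theorem twoSquaresTwoCubes_zmod_two_pow (m : ℕ) : TwoSquaresTwoCubes (ZMod (2 ^ m)) := by
  intro n
  obtain ⟨n, rfl⟩ := ZMod.intCast_surjective n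
  have hodd : (1 : ZMod 2) ^ 3 = ((n - (n + 1) ^ 3 : ℤ) : ZMod 2) := by
    push_cast
    generalize (n : ZMod 2) = t
    revert t
    decide
  obtain ⟨a, ha⟩ := ZMod.exists_pow_eq_intCast_of_pow_eq (by decide) one_ne_zero hodd m
  exact ⟨0, 0, a, (n + 1 : ℤ), by push_cast at ha ⊢; rw [ha]; ring⟩

theorem twoSquaresTwoCubes_zmod_primePow_of_ne_two {p : ℕ} [Fact p.Prime] (hp : p ≠ 2)
    (m : ℕ) : TwoSquaresTwoCubes (ZMod (p ^ m)) := by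
  intro n
  obtain ⟨n, rfl⟩ := ZMod.intCast_surjective n
  obtain ⟨x, y, a, hx, h⟩ := ZMod.exists_ne_zero_sq_add_sq_add_cube_eq (n : ZMod p)
  obtain ⟨y, rfl⟩ := ZMod.intCast_surjective y
  obtain ⟨a, rfl⟩ := ZMod.intCast_surjective a
  have h2 : ((2 : ℕ) : ZMod p) ≠ 0 := by
    exact_mod_cast Ring.two_ne_zero (by rwa [ZMod.ringChar_zmod_n])
  obtain ⟨x, hx'⟩ := ZMod.exists_pow_eq_intCast_of_pow_eq (c := n - y ^ 2 - a ^ 3) h2 hx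
    (by push_cast; linear_combination h) m
  exact ⟨x, y, a, 0, by push_cast at hx' ⊢; rw [hx']; ring⟩

theorem twoSquaresTwoCubes_zmod {q : ℕ} (hq : q ≠ 0) : TwoSquaresTwoCubes (ZMod q) := by
  induction q using Nat.recOnPrimeCoprime with
  | zero => exact absurd rfl hq
  | prime_pow p m hp =>
    have : Fact p.Prime := ⟨hp⟩
    rcases eq_or_ne p 2 with rfl | hp2
    · exact twoSquaresTwoCubes_zmod_two_pow m
    · exact twoSquaresTwoCubes_zmod_primePow_of_ne_two hp2 m
  | coprime a b ha hb hab iha ihb =>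
    exact ((iha (by omega)).prod (ihb (by omega))).of_surjective
      (ZMod.chineseRemainder hab).symm.toRingHom (ZMod.chineseRemainder hab).symm.surjective

/-- For every `q ≥ 1` and every integer `n`, the congruence
`x₁² + x₂² + x₃³ + x₄³ + x₅⁶ + x₆⁶ ≡ n (mod q)` is soluble. -/
theorem stmt_8 :
    ∀ q : ℕ, 1 ≤ q → ∀ n : ℤ,
      ∃ x : Fin 6 → ℤ,
        Int.ModEq (q : ℤ)
          (x 0 ^ 2 + x 1 ^ 2 + x 2 ^ 3 + x 3 ^ 3 + x 4 ^ 6 + x 5 ^ 6) n := by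
  intro q hq n
  obtain ⟨x, y, a, b, h⟩ := twoSquaresTwoCubes_zmod (by omega : q ≠ 0) (n : ZMod q)
  obtain ⟨x, rfl⟩ := ZMod.intCast_surjective x
  obtain ⟨y, rfl⟩ := ZMod.intCast_surjective y
  obtain ⟨a, rfl⟩ := ZMod.intCast_surjective a
  obtain ⟨b, rfl⟩ := ZMod.intCast_surjective b
  refine ⟨![x, y, a, b, 0, 0], ?_⟩
  rw [← ZMod.intCast_eq_intCast_iff]
  simpa using h
end

section
/- Let X be large, let 𝒵 be any set of integers contained in (X/2, X] of cardinality Z, and for each n ∈ 𝒵 let η_n be a complex number with |η_n| = 1; put K(α) = Σ_{n ∈ 𝒵} η_n e(−nα). Then for each ε > 0 one has ∫₀¹ |f₃(α)² K(α)²| dα ≪ P₃ Z + P₃^{ε} Z². -/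
open MeasureTheory Filter Set Topology

/-! Expanding the square, `∫₀¹ |f₃ K|²` is at most the number of solutions of
`x³ - n = y³ - m` with `x, y ≤ P₃` and `n, m ∈ 𝒵`. When `n = m` this forces `x = y`, giving `P₃ Z`
solutions. When `n ≠ m`, `x - y` is a divisor of `n - m` that determines the solution, so each of
the at most `Z²` pairs `(n, m)` contributes at most `d(|n - m|) ≪ X^{ε/3} ≪ P₃^ε`. -/

open Finset Complex

lemma e_add (x y : ℝ) : e (x + y) = e x * e y := by
  simp only [e, ← Complex.exp_add]
  push_cast
  ring_nf

lemma conj_e (x : ℝ) : (starRingEnd ℂ) (e x) = e (-x) := by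
  simp only [e, ← Complex.exp_conj, map_mul, Complex.conj_I, Complex.conj_ofReal, map_ofNat]
  push_cast
  ring_nf

@[fun_prop]
lemma continuous_e : Continuous e := by
  unfold e
  fun_prop

lemma integral_e_int_mul (k : ℤ) : ∫ α in (0 : ℝ)..1, e (k * α) = if k = 0 then 1 else 0 := by
  split_ifs with hk
  · simp [hk, e]
  have hc : 2 * Real.pi * I * k ≠ 0 := by simp [Real.pi_ne_zero, hk, I_ne_zero]
  have h : ∀ α : ℝ, e (k * α) = Complex.exp ((2 * Real.pi * I * k) * α) := by
    intro α
    simp only [e]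
    push_cast
    ring_nf
  simp only [h, integral_exp_mul_complex hc, ofReal_one, mul_one, ofReal_zero, mul_zero,
    Complex.exp_zero]
  rw [show 2 * Real.pi * I * k = k * (2 * Real.pi * I) by ring, Complex.exp_int_mul_two_pi_mul_I]
  simp

lemma integral_norm_sq_sum_le_card {ι : Type*} (A : Finset ι) (c : ι → ℂ) (ν : ι → ℤ)
    (hc : ∀ i ∈ A, ‖c i‖ ≤ 1) :
    ∫ α in (0 : ℝ)..1, ‖∑ i ∈ A, c i * e (ν i * α)‖ ^ 2 ≤ #{ij ∈ A ×ˢ A | ν ij.1 = ν ij.2} := by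
  have hsq : ∀ α : ℝ, ((‖∑ i ∈ A, c i * e (ν i * α)‖ ^ 2 : ℝ) : ℂ) =
      ∑ ij ∈ A ×ˢ A, c ij.1 * starRingEnd ℂ (c ij.2) * e (((ν ij.1 - ν ij.2 : ℤ) : ℝ) * α) := by
    intro α
    rw [ofReal_pow, ← Complex.mul_conj', map_sum, sum_mul_sum, ← sum_product']
    refine sum_congr rfl fun ij _ => ?_
    rw [map_mul, conj_e, show (((ν ij.1 - ν ij.2 : ℤ) : ℝ)) * α = ν ij.1 * α + -(ν ij.2 * α) by
      push_cast; ring, e_add]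
    ring
  have hint : ((∫ α in (0 : ℝ)..1, ‖∑ i ∈ A, c i * e (ν i * α)‖ ^ 2 : ℝ) : ℂ) =
      ∑ ij ∈ A ×ˢ A, if ν ij.1 = ν ij.2 then c ij.1 * starRingEnd ℂ (c ij.2) else 0 := by
    rw [← intervalIntegral.integral_ofReal, funext hsq, intervalIntegral.integral_finsetSum
      fun _ _ => by apply Continuous.intervalIntegrable; fun_prop]
    refine sum_congr rfl fun ij _ => ?_
    simp only [intervalIntegral.integral_const_mul, integral_e_int_mul, sub_eq_zero]
    split_ifs <;> simp
  calc _ ≤ ‖((∫ α in (0 : ℝ)..1, ‖∑ i ∈ A, c i * e (ν i * α)‖ ^ 2 : ℝ) : ℂ)‖ := by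
        rw [Complex.norm_real]; exact Real.le_norm_self _
    _ ≤ ∑ ij ∈ A ×ˢ A, ‖if ν ij.1 = ν ij.2 then c ij.1 * starRingEnd ℂ (c ij.2) else 0‖ := by
        rw [hint]; exact norm_sum_le _ _
    _ ≤ ∑ ij ∈ A ×ˢ A, if ν ij.1 = ν ij.2 then (1 : ℝ) else 0 := by
        refine sum_le_sum fun ij hij => ?_
        rw [mem_product] at hij
        split_ifs
        · rw [norm_mul, Complex.norm_conj]
          exact mul_le_one₀ (hc _ hij.1) (norm_nonneg _) (hc _ hij.2)
        · simp
    _ = #{ij ∈ A ×ˢ A | ν ij.1 = ν ij.2} := by rw [card_filter]; push_cast; rfl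

lemma add_one_le_rpow_pow_of_two_rpow_le {ε b : ℝ} (hε : 0 < ε) (hb : 2 ^ ε⁻¹ ≤ b) (a : ℕ) :
    (a + 1 : ℝ) ≤ (b ^ a) ^ ε :=
  calc (a + 1 : ℝ) ≤ 2 ^ a := by exact_mod_cast Nat.lt_two_pow_self
    _ = ((2 ^ ε⁻¹) ^ a) ^ ε := by
        rw [← Real.rpow_natCast, ← Real.rpow_natCast, ← Real.rpow_mul (by positivity),
          ← Real.rpow_mul (by positivity)]
        congr 1
        field_simp
    _ ≤ (b ^ a) ^ ε := by gcongr

lemma add_one_le_mul_rpow_pow {ε b : ℝ} (hε : 0 < ε) (hb : 2 ≤ b) (a : ℕ) :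
    (a + 1 : ℝ) ≤ max 1 (ε * Real.log 2)⁻¹ * (b ^ a) ^ ε := by
  have hc : 0 < ε * Real.log 2 := by positivity
  have hM : 1 ≤ max 1 (ε * Real.log 2)⁻¹ * (ε * Real.log 2) :=
    (inv_mul_cancel₀ hc.ne').symm.le.trans (by gcongr; exact le_max_right _ _)
  have hexp : 1 + a * (ε * Real.log 2) ≤ (b ^ a) ^ ε :=
    calc 1 + a * (ε * Real.log 2) ≤ Real.exp (a * ε * Real.log 2) := by
          linarith [Real.add_one_le_exp (a * ε * Real.log 2)]
      _ = ((2 : ℝ) ^ a) ^ ε := by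
        rw [← Real.rpow_natCast, ← Real.rpow_mul (by norm_num), Real.rpow_def_of_pos (by norm_num)]
        ring_nf
      _ ≤ (b ^ a) ^ ε := by gcongr
  nlinarith [le_max_left 1 (ε * Real.log 2)⁻¹, (a.cast_nonneg : (0 : ℝ) ≤ a)]

lemma prod_ite_lt_le_pow_ceil {M : ℝ} (hM : 1 ≤ M) (B : ℝ) (s : Finset ℕ) :
    ∏ p ∈ s, (if (p : ℝ) < B then M else 1) ≤ M ^ ⌈B⌉₊ := by
  rw [prod_ite, prod_const, prod_const_one, mul_one]
  refine pow_le_pow_right₀ hM ((card_le_card fun p hp => ?_).trans (card_range _).le)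
  exact mem_range.2 (Nat.lt_ceil.2 (mem_filter.1 hp).2)

theorem Nat.card_divisors_le_mul_rpow {ε : ℝ} (hε : 0 < ε) :
    ∃ C : ℝ, ∀ n : ℕ, (#n.divisors : ℝ) ≤ C * n ^ ε := by
  set B : ℝ := 2 ^ ε⁻¹
  set M : ℝ := max 1 (ε * Real.log 2)⁻¹
  refine ⟨M ^ ⌈B⌉₊, fun n => ?_⟩
  rcases eq_or_ne n 0 with rfl | hn
  · simp [Real.zero_rpow hε.ne']
  -- only the primes below `B` can have `p ^ (a ε) < a + 1`
  have hprime : ∀ p ∈ n.primeFactors, ((n.factorization p + 1 : ℕ) : ℝ) ≤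
      (if (p : ℝ) < B then M else 1) * ((p : ℝ) ^ n.factorization p) ^ ε := by
    intro p hp
    push_cast
    split_ifs with hpB
    · exact add_one_le_mul_rpow_pow hε
        (by exact_mod_cast (Nat.prime_of_mem_primeFactors hp).two_le) _
    · rw [one_mul]
      exact add_one_le_rpow_pow_of_two_rpow_le hε (not_lt.1 hpB) _
  calc (#n.divisors : ℝ) = ∏ p ∈ n.primeFactors, ((n.factorization p + 1 : ℕ) : ℝ) := by
        rw [Nat.card_divisors hn, Nat.cast_prod]
    _ ≤ ∏ p ∈ n.primeFactors,
          (if (p : ℝ) < B then M else 1) * ((p : ℝ) ^ n.factorization p) ^ ε :=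
        prod_le_prod (fun _ _ => by positivity) hprime
    _ = (∏ p ∈ n.primeFactors, if (p : ℝ) < B then M else 1) * (n : ℝ) ^ ε := by
        rw [prod_mul_distrib, Real.finsetProd_rpow _ _ (fun _ _ => by positivity)]
        congr 2
        exact_mod_cast Nat.prod_factorization_pow_eq_self hn
    _ ≤ M ^ ⌈B⌉₊ * n ^ ε := by
        gcongr
        exact prod_ite_lt_le_pow_ceil (le_max_left _ _) B _

lemma eq_of_cube_sub_cube_eq {x y x' y' : ℕ} (hxy : x ≠ y) (hd : (x : ℤ) - y = x' - y')
    (h : (x : ℤ) ^ 3 - y ^ 3 = x' ^ 3 - y' ^ 3) : x = x' ∧ y = y' := by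
  have key : 3 * ((x : ℤ) - y) * ((y : ℤ) - y') * ((x : ℤ) + y') = 0 := by
    linear_combination h - ((x' : ℤ) ^ 2 + x' * (y' + x - y) + (y' + x - y) ^ 2) * hd
  simp only [mul_eq_zero] at key
  omega

def cubeDiffReps (P : ℕ) (N : ℤ) : ℕ :=
  #{xy ∈ Finset.Icc 1 P ×ˢ Finset.Icc 1 P | (xy.1 : ℤ) ^ 3 - xy.2 ^ 3 = N}

lemma cubeDiffReps_zero (P : ℕ) : cubeDiffReps P 0 = P :=
  calc cubeDiffReps P 0 = #(Finset.Icc 1 P).diag := by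
        unfold cubeDiffReps
        congr 1
        ext ⟨x, y⟩
        simp only [mem_filter, mem_product, mem_diag, sub_eq_zero, Odd.pow_inj (by decide : Odd 3),
          Nat.cast_inj]
        constructor
        · rintro ⟨⟨hx, -⟩, rfl⟩
          exact ⟨hx, rfl⟩
        · rintro ⟨hx, rfl⟩
          exact ⟨⟨hx, hx⟩, rfl⟩
    _ = P := by simp

lemma cubeDiffReps_le_card_divisors (P : ℕ) {N : ℤ} (hN : N ≠ 0) :
    cubeDiffReps P N ≤ #N.natAbs.divisors := by
  refine card_le_card_of_injOn (fun xy => ((xy.1 : ℤ) - xy.2).natAbs) (fun xy hxy => ?_) ?_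
  · obtain ⟨-, hxy⟩ := mem_filter.1 hxy
    refine Nat.mem_divisors.2
      ⟨Int.natAbs_dvd_natAbs.2 ⟨xy.1 ^ 2 + xy.1 * xy.2 + xy.2 ^ 2, by rw [← hxy]; ring⟩, by simpa⟩
  · intro xy hxy xy' hxy' hd
    obtain ⟨-, hxy⟩ := mem_filter.1 hxy
    obtain ⟨-, hxy'⟩ := mem_filter.1 hxy'
    have hne : xy.1 ≠ xy.2 := by
      rintro h
      rw [h, sub_self] at hxy
      exact hN hxy.symm
    -- `x - y` has the sign of `N`, so `|x - y|` determines `x - y`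
    have hsign : ∀ a b : ℤ, 0 < a - b ↔ 0 < a ^ 3 - b ^ 3 := fun a b => by
      rw [sub_pos, sub_pos, Odd.pow_lt_pow (by decide)]
    have hsign₁ := hsign xy.1 xy.2
    have hsign₂ := hsign xy'.1 xy'.2
    have hd : (xy.1 : ℤ) - xy.2 = xy'.1 - xy'.2 := by simp only at hd; omega
    obtain ⟨h1, h2⟩ := eq_of_cube_sub_cube_eq hne hd (hxy.trans hxy'.symm)
    exact Prod.ext h1 h2

def shiftedPowerSolutions (k P : ℕ) (Z : Finset ℤ) : Finset ((ℕ × ℤ) × (ℕ × ℤ)) :=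
  {pq ∈ (Finset.Icc 1 P ×ˢ Z) ×ˢ (Finset.Icc 1 P ×ˢ Z) |
    (pq.1.1 : ℤ) ^ k - pq.1.2 = pq.2.1 ^ k - pq.2.2}

lemma card_shiftedPowerSolutions_three_le (P : ℕ) (Z : Finset ℤ) {D : ℝ} (hD₀ : 0 ≤ D)
    (hD : ∀ n ∈ Z, ∀ m ∈ Z, n ≠ m → (#(n - m).natAbs.divisors : ℝ) ≤ D) :
    (#(shiftedPowerSolutions 3 P Z) : ℝ) ≤ P * #Z + D * #Z ^ 2 := by
  set T := shiftedPowerSolutions 3 P Z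
  have hmaps : ∀ pq ∈ T, (pq.1.2, pq.2.2) ∈ Z ×ˢ Z := by
    intro pq hpq
    simp only [T, shiftedPowerSolutions, mem_filter, mem_product] at hpq
    exact mem_product.2 ⟨hpq.1.1.2, hpq.1.2.2⟩
  have hfiber : ∀ nm ∈ Z ×ˢ Z,
      #{pq ∈ T | (pq.1.2, pq.2.2) = nm} ≤ cubeDiffReps P (nm.1 - nm.2) := by
    rintro ⟨n, m⟩ -
    refine card_le_card_of_injOn (fun pq => (pq.1.1, pq.2.1)) (fun pq hpq => ?_) ?_
    · simp only [T, shiftedPowerSolutions, coe_filter, mem_filter, mem_product,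
        Set.mem_ofPred_eq, Prod.mk.injEq] at hpq ⊢
      obtain ⟨⟨⟨⟨hx, -⟩, hy, -⟩, heq⟩, rfl, rfl⟩ := hpq
      exact ⟨⟨hx, hy⟩, by linear_combination heq⟩
    · intro pq hpq pq' hpq' h
      simp only [T, shiftedPowerSolutions, coe_filter, Set.mem_ofPred_eq, Prod.mk.injEq]
        at hpq hpq' h
      ext <;> grind
  have hreps : ∀ nm ∈ Z ×ˢ Z,
      (cubeDiffReps P (nm.1 - nm.2) : ℝ) ≤ (if nm.1 = nm.2 then (P : ℝ) else 0) + D := by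
    rintro ⟨n, m⟩ hnm
    rw [mem_product] at hnm
    dsimp only at hnm ⊢
    split_ifs with h
    · simp [h, cubeDiffReps_zero, hD₀]
    · calc (cubeDiffReps P (n - m) : ℝ) ≤ #(n - m).natAbs.divisors := by
            exact_mod_cast cubeDiffReps_le_card_divisors P (sub_ne_zero.2 h)
        _ ≤ 0 + D := (zero_add D).symm ▸ hD n hnm.1 m hnm.2 h
  calc (#T : ℝ) = ∑ nm ∈ Z ×ˢ Z, (#{pq ∈ T | (pq.1.2, pq.2.2) = nm} : ℝ) := by
        exact_mod_cast card_eq_sum_card_fiberwise hmaps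
    _ ≤ ∑ nm ∈ Z ×ˢ Z, ((if nm.1 = nm.2 then (P : ℝ) else 0) + D) :=
        sum_le_sum fun nm hnm => (Nat.cast_le.2 (hfiber nm hnm)).trans (hreps nm hnm)
    _ = P * #Z + D * #Z ^ 2 := by
        rw [sum_add_distrib, sum_product]
        simp only [sum_ite_eq, sum_ite_mem, Finset.inter_self, sum_const, nsmul_eq_mul,
          card_product, Nat.cast_mul]
        ring

lemma f_mul_K (X : ℝ) (k : ℕ) (Z : Finset ℤ) (η : ℤ → ℂ) (α : ℝ) :
    f X k α * K Z η α =
      ∑ xn ∈ Finset.Icc 1 (Pk X k) ×ˢ Z, η xn.2 * e (((xn.1 : ℤ) ^ k - xn.2 : ℤ) * α) := by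
  rw [f, K, sum_mul_sum, ← sum_product']
  refine sum_congr rfl fun xn _ => ?_
  rw [show (((xn.1 : ℤ) ^ k - xn.2 : ℤ) : ℝ) * α = α * (xn.1 : ℝ) ^ k + -(xn.2 * α) by
    push_cast; ring, e_add]
  ring

lemma integral_norm_sq_f_mul_norm_sq_K_le (X : ℝ) (k : ℕ) (Z : Finset ℤ) (η : ℤ → ℂ)
    (hη : ∀ n ∈ Z, ‖η n‖ ≤ 1) :
    ∫ α in (0 : ℝ)..1, ‖f X k α‖ ^ 2 * ‖K Z η α‖ ^ 2 ≤ #(shiftedPowerSolutions k (Pk X k) Z) := by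
  simp_rw [← mul_pow, ← norm_mul, f_mul_K]
  exact integral_norm_sq_sum_le_card (Finset.Icc 1 (Pk X k) ×ˢ Z) (fun xn => η xn.2)
    (fun xn => (xn.1 : ℤ) ^ k - xn.2) fun xn hxn => hη _ (mem_product.1 hxn).2

lemma rpow_one_div_le_two_mul_Pk {X : ℝ} (hX : 1 ≤ X) (k : ℕ) :
    X ^ ((1 : ℝ) / k) ≤ 2 * Pk X k := by
  have h1 : 1 ≤ X ^ ((1 : ℝ) / k) := Real.one_le_rpow hX (by positivity)
  have h2 : (1 : ℝ) ≤ Pk X k := by exact_mod_cast Nat.le_floor (by exact_mod_cast h1)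
  have h3 := Nat.lt_floor_add_one (X ^ ((1 : ℝ) / k))
  rw [Pk] at h2 ⊢
  linarith

/-- Lemma 5.2: `∫₀¹ |f₃(α)² K(α)²| dα ≪ P₃ Z + P₃^ε Z²`. -/
theorem stmt_11 :
    ∀ ε : ℝ, 0 < ε → ∃ C X₀ : ℝ, ∀ X : ℝ, X₀ ≤ X →
      ∀ (Z : Finset ℤ) (η : ℤ → ℂ),
        (∀ n ∈ Z, X / 2 < (n : ℝ) ∧ (n : ℝ) ≤ X) →
        (∀ n ∈ Z, ‖η n‖ = 1) →
        (∫ α in (0:ℝ)..1, ‖f X 3 α‖ ^ 2 * ‖K Z η α‖ ^ 2)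
          ≤ C * ((Pk X 3 : ℝ) * (Z.card : ℝ) + (Pk X 3 : ℝ) ^ ε * (Z.card : ℝ) ^ 2) := by
  intro ε hε
  obtain ⟨C, hC⟩ := Nat.card_divisors_le_mul_rpow (ε := ε / 3) (by positivity)
  have hC₁ : 1 ≤ C := by simpa using hC 1
  refine ⟨1 + C * 2 ^ ε, 1, fun X hX Z η hZ hη => ?_⟩
  set P : ℝ := (Pk X 3 : ℝ)
  have hdiv : ∀ n ∈ Z, ∀ m ∈ Z, n ≠ m →
      (#(n - m).natAbs.divisors : ℝ) ≤ C * 2 ^ ε * P ^ ε := by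
    intro n hn m hm _
    have hnm : ((n - m).natAbs : ℝ) ≤ X := by
      rw [Nat.cast_natAbs, Int.cast_abs, abs_le]
      push_cast
      constructor <;> linarith [hZ n hn, hZ m hm]
    calc (#(n - m).natAbs.divisors : ℝ) ≤ C * ((n - m).natAbs : ℝ) ^ (ε / 3) := hC _
      _ ≤ C * X ^ (ε / 3) := by gcongr
      _ = C * (X ^ ((1 : ℝ) / (3 : ℕ))) ^ ε := by
          rw [← Real.rpow_mul (by linarith)]
          ring_nf
      _ ≤ C * (2 * P) ^ ε := by gcongr; exact rpow_one_div_le_two_mul_Pk hX 3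
      _ = C * 2 ^ ε * P ^ ε := by rw [Real.mul_rpow (by norm_num) (by positivity)]; ring
  calc _ ≤ (#(shiftedPowerSolutions 3 (Pk X 3) Z) : ℝ) :=
        integral_norm_sq_f_mul_norm_sq_K_le X 3 Z η fun n hn => (hη n hn).le
    _ ≤ P * #Z + C * 2 ^ ε * P ^ ε * #Z ^ 2 :=
        card_shiftedPowerSolutions_three_le _ Z (by positivity) hdiv
    _ ≤ (1 + C * 2 ^ ε) * (P * #Z + P ^ ε * #Z ^ 2) := by
        have : 0 ≤ C * 2 ^ ε * (P * #Z) + P ^ ε * #Z ^ 2 := by positivity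
        linarith
end
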